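/- Let f : ℝⁿ → ℝ have L-Lipschitz gradient, satisfy the PL inequality with constant 0 < μ ≤ L/2, and attain minimum f*. Suppose x^{(k+1)} = x^{(k)} − d^{(k)} where d^{(k)}_i = t·(1 + r^{(k)}_i)·∇f(x^{(k)})_i with 0 ≤ 1 + r^{(k)}_i ≤ 4 for all i and t < 1/(4L). Then with γ_j := min_i (1 + r^{(j)}_i) ∈ [0,4], f(x^{(k)}) − f* ≤ ∏_{j=0}^{k−1} (1 − tμγ_j) · (f(x^{(0)}) − f*), and each factor satisfies 1/2 < 1 − tμγ_j < 1 when γ_j > 0. -/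

import Mathlib

/-!
With an `L`-Lipschitz gradient, `f (x + v) ≤ f x + ⟪∇f x, v⟫ + L/2 ‖v‖²`. For the coordinatewise
step `vᵢ = -aᵢ ∇ᵢf(x)` with `γ ≤ aᵢ` and `L aᵢ ≤ 1`, each coordinate then contributes a decrease
of at least `aᵢ/2 · (∇ᵢf)² ≥ γ/2 · (∇ᵢf)²`, so `f` drops by at least `γ/2 ‖∇f x‖²`, which the
PL inequality turns into the contraction factor `1 - μγ` of the optimality gap.
-/
open scoped RealInnerProductSpace
open Finset

section LipschitzGradient

variable {F : Type*} [NormedAddCommGroup F] [InnerProductSpace ℝ F] [CompleteSpace F]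
  {f : F → ℝ} {L : ℝ}

theorem hasDerivAt_comp_add_smul (hf : Differentiable ℝ f) (x v : F) (s : ℝ) :
    HasDerivAt (fun s : ℝ => f (x + s • v)) ⟪gradient f (x + s • v), v⟫ s := by
  have hline : HasDerivAt (fun s : ℝ => x + s • v) v s := by
    simpa using ((hasDerivAt_id s).smul_const v).const_add x
  rw [inner_gradient_left]
  exact (hf _).hasFDerivAt.comp_hasDerivAt s hline

theorem inner_gradient_add_smul_sub_le
    (hLip : ∀ y z, ‖gradient f y - gradient f z‖ ≤ L * ‖y - z‖) (x v : F) {s : ℝ} (hs : 0 ≤ s) :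
    ⟪gradient f (x + s • v), v⟫ - ⟪gradient f x, v⟫ ≤ L * s * ‖v‖ ^ 2 :=
  calc ⟪gradient f (x + s • v), v⟫ - ⟪gradient f x, v⟫
      = ⟪gradient f (x + s • v) - gradient f x, v⟫ := (inner_sub_left _ _ _).symm
    _ ≤ ‖gradient f (x + s • v) - gradient f x‖ * ‖v‖ := real_inner_le_norm _ _
    _ ≤ L * ‖(x + s • v) - x‖ * ‖v‖ := by gcongr; exact hLip _ _
    _ = L * s * ‖v‖ ^ 2 := by
      rw [add_sub_cancel_left, norm_smul, Real.norm_of_nonneg hs]; ring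

theorem apply_add_le_of_lipschitz_gradient (hf : Differentiable ℝ f)
    (hLip : ∀ y z, ‖gradient f y - gradient f z‖ ≤ L * ‖y - z‖) (x v : F) :
    f (x + v) ≤ f x + ⟪gradient f x, v⟫ + L / 2 * ‖v‖ ^ 2 := by
  set B : ℝ → ℝ := fun s => f x + s * ⟪gradient f x, v⟫ + L / 2 * s ^ 2 * ‖v‖ ^ 2
  have hB : ∀ s, HasDerivAt B (⟪gradient f x, v⟫ + L * s * ‖v‖ ^ 2) s := fun s => by
    have h := (((hasDerivAt_id s).mul_const ⟪gradient f x, v⟫).const_add (f x)).add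
      (((hasDerivAt_pow 2 s).const_mul (L / 2)).mul_const (‖v‖ ^ 2))
    exact h.congr_deriv (by push_cast; ring)
  have hφ := hasDerivAt_comp_add_smul hf x v
  have key := image_le_of_deriv_right_le_deriv_boundary (a := 0) (b := 1)
    (fun s _ => (hφ s).continuousAt.continuousWithinAt) (fun s _ => (hφ s).hasDerivWithinAt)
    (B := B) (by simp [B]) (fun s _ => (hB s).continuousAt.continuousWithinAt)
    (fun s _ => (hB s).hasDerivWithinAt)
    (fun s hs => by linarith [inner_gradient_add_smul_sub_le hLip x v hs.1])
    (Set.right_mem_Icc.2 zero_le_one)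
  simpa [B] using key

end LipschitzGradient

section Coordinatewise

variable {ι : Type*} [Fintype ι]

theorem inner_toLp_mul_apply (a : ι → ℝ) (g : EuclideanSpace ℝ ι) :
    ⟪g, WithLp.toLp 2 (fun i => a i * g i)⟫ = ∑ i, a i * g i ^ 2 := by
  simp only [PiLp.inner_apply, RCLike.inner_apply, conj_trivial]
  exact sum_congr rfl fun i _ => by ring

theorem norm_toLp_mul_apply_sq (a : ι → ℝ) (g : EuclideanSpace ℝ ι) :
    ‖WithLp.toLp 2 (fun i => a i * g i)‖ ^ 2 = ∑ i, a i ^ 2 * g i ^ 2 := by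
  simp only [EuclideanSpace.real_norm_sq_eq, mul_pow]

theorem half_le_mul_one_sub {L a : ℝ} (ha : 0 ≤ a) (hLa : L * a ≤ 1) :
    a / 2 ≤ a * (1 - L / 2 * a) := by
  nlinarith

variable {f : EuclideanSpace ℝ ι → ℝ} {L : ℝ}

theorem apply_sub_toLp_mul_gradient_le (hf : Differentiable ℝ f)
    (hLip : ∀ y z, ‖gradient f y - gradient f z‖ ≤ L * ‖y - z‖) (x : EuclideanSpace ℝ ι)
    (a : ι → ℝ) :
    f (x - WithLp.toLp 2 (fun i => a i * gradient f x i))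
      ≤ f x - ∑ i, a i * (1 - L / 2 * a i) * gradient f x i ^ 2 := by
  have h := apply_add_le_of_lipschitz_gradient hf hLip x
    (-WithLp.toLp 2 (fun i => a i * gradient f x i))
  rw [← sub_eq_add_neg, inner_neg_right, norm_neg, inner_toLp_mul_apply,
    norm_toLp_mul_apply_sq] at h
  convert h using 1
  simp only [mul_sum, sub_eq_add_neg, ← sum_neg_distrib, add_assoc, ← sum_add_distrib]
  congr 1
  exact sum_congr rfl fun i _ => by ring

theorem apply_sub_toLp_mul_gradient_le_sub_norm_sq (hf : Differentiable ℝ f)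
    (hLip : ∀ y z, ‖gradient f y - gradient f z‖ ≤ L * ‖y - z‖) (x : EuclideanSpace ℝ ι)
    {a : ι → ℝ} {γ : ℝ} (hγ : 0 ≤ γ) (hγa : ∀ i, γ ≤ a i) (hLa : ∀ i, L * a i ≤ 1) :
    f (x - WithLp.toLp 2 (fun i => a i * gradient f x i))
      ≤ f x - γ / 2 * ‖gradient f x‖ ^ 2 :=
  calc f (x - WithLp.toLp 2 (fun i => a i * gradient f x i))
      ≤ f x - ∑ i, a i * (1 - L / 2 * a i) * gradient f x i ^ 2 :=
        apply_sub_toLp_mul_gradient_le hf hLip x a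
    _ ≤ f x - ∑ i, γ / 2 * gradient f x i ^ 2 := by
        gcongr with i
        calc γ / 2 ≤ a i / 2 := by linarith [hγa i]
          _ ≤ a i * (1 - L / 2 * a i) := half_le_mul_one_sub (hγ.trans (hγa i)) (hLa i)
    _ = f x - γ / 2 * ‖gradient f x‖ ^ 2 := by
        rw [EuclideanSpace.real_norm_sq_eq, mul_sum]

theorem apply_sub_toLp_mul_gradient_sub_le_of_PL (hf : Differentiable ℝ f)
    (hLip : ∀ y z, ‖gradient f y - gradient f z‖ ≤ L * ‖y - z‖) {x : EuclideanSpace ℝ ι}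
    {μ fstar : ℝ} (hPL : 2 * μ * (f x - fstar) ≤ ‖gradient f x‖ ^ 2)
    {a : ι → ℝ} {γ : ℝ} (hγ : 0 ≤ γ) (hγa : ∀ i, γ ≤ a i) (hLa : ∀ i, L * a i ≤ 1) :
    f (x - WithLp.toLp 2 (fun i => a i * gradient f x i)) - fstar
      ≤ (1 - μ * γ) * (f x - fstar) := by
  have hdec := apply_sub_toLp_mul_gradient_le_sub_norm_sq hf hLip x hγ hγa hLa
  have hPL' : γ / 2 * (2 * μ * (f x - fstar)) ≤ γ / 2 * ‖gradient f x‖ ^ 2 := by gcongr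
  linarith

end Coordinatewise

theorem le_prod_mul_of_le_mul {e c : ℕ → ℝ} (hc : ∀ k, 0 ≤ c k)
    (h : ∀ k, e (k + 1) ≤ c k * e k) (k : ℕ) : e k ≤ (∏ j ∈ range k, c j) * e 0 := by
  induction k with
  | zero => simp
  | succ k ih =>
    calc e (k + 1) ≤ c k * e k := h k
      _ ≤ c k * ((∏ j ∈ range k, c j) * e 0) := by gcongr; exact hc k
      _ = (∏ j ∈ range (k + 1), c j) * e 0 := by rw [prod_range_succ]; ring

theorem stmt_10_general (n : ℕ) (f : EuclideanSpace ℝ (Fin n) → ℝ)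
    (L μ t fstar : ℝ) (x : ℕ → EuclideanSpace ℝ (Fin n))
    (r : ℕ → Fin n → ℝ) (γ : ℕ → ℝ)
    (hdiff : Differentiable ℝ f)
    (hLip : ∀ y z, ‖gradient f y - gradient f z‖ ≤ L * ‖y - z‖)
    (hμ : 0 < μ) (hμL : μ ≤ L / 2)
    (hPL : ∀ y, 2 * μ * (f y - fstar) ≤ ‖gradient f y‖ ^ 2)
    (ht : 0 < t) (htL : t < 1 / (4 * L))
    (hr : ∀ k i, 0 ≤ 1 + r k i ∧ 1 + r k i ≤ 4)
    (hγ : ∀ k, (∀ i, γ k ≤ 1 + r k i) ∧ ∃ i, γ k = 1 + r k i)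
    (hupdate : ∀ k, x (k + 1)
      = x k - (WithLp.equiv 2 (Fin n → ℝ)).symm (fun i => t * (1 + r k i) * gradient f (x k) i)) :
    (∀ k, f (x k) - fstar
        ≤ (∏ j ∈ Finset.range k, (1 - t * μ * γ j)) * (f (x 0) - fstar))
    ∧ ∀ j, 0 < γ j → 1 / 2 < 1 - t * μ * γ j ∧ 1 - t * μ * γ j < 1 := by
  have hL : 0 < L := by linarith
  have hLt : L * t < 1 / 4 := by
    rw [lt_div_iff₀ (by positivity)] at htL
    linarith
  have hγ_mem : ∀ k, 0 ≤ γ k ∧ γ k ≤ 4 := fun k => by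
    obtain ⟨i, hi⟩ := (hγ k).2
    exact hi ▸ hr k i
  have hfactor : ∀ k, 1 / 2 < 1 - t * μ * γ k := fun k => by
    have : t * μ * γ k ≤ t * (L / 2) * 4 :=
      mul_le_mul (by gcongr) (hγ_mem k).2 (hγ_mem k).1 (by positivity)
    linarith
  have hstep : ∀ k, f (x (k + 1)) - fstar ≤ (1 - t * μ * γ k) * (f (x k) - fstar) := fun k => by
    have h := apply_sub_toLp_mul_gradient_sub_le_of_PL hdiff hLip (hPL (x k))
      (a := fun i => t * (1 + r k i)) (mul_nonneg ht.le (hγ_mem k).1)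
      (fun i => by gcongr; exact (hγ k).1 i) (fun i => by nlinarith [hr k i])
    rw [hupdate k, WithLp.equiv_symm_apply]
    convert h using 2
    ring
  refine ⟨le_prod_mul_of_le_mul (e := fun k => f (x k) - fstar)
    (fun k => by linarith [hfactor k]) hstep, fun j hj => ⟨hfactor j, ?_⟩⟩
  have : 0 < t * μ * γ j := by positivity
  linarith

/-- Theorem boundforfixed_point_PL: perturbed gradient descent
under the PL inequality.  The update is the componentwise multiplicative
perturbation `d^{(k)}_i = t(1 + r^{(k)}_i)·∇f(x^{(k)})_i` with
`0 ≤ 1 + r^{(k)}_i ≤ 4` and `t < 1/(4L)`.  With `γ_j = min_i (1 + r^{(j)}_i)`,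
`f(x^{(k)}) − f* ≤ ∏_{j<k} (1 − tμγ_j)·(f(x^{(0)}) − f*)`, and when `γ_j > 0`
the factor satisfies `1/2 < 1 − tμγ_j < 1`. -/
theorem stmt_10 (n : ℕ) (f : EuclideanSpace ℝ (Fin n) → ℝ)
    (L μ t fstar : ℝ) (x : ℕ → EuclideanSpace ℝ (Fin n))
    (r : ℕ → Fin n → ℝ) (γ : ℕ → ℝ)
    (hdiff : Differentiable ℝ f)
    (hL : 0 < L)
    (hLip : ∀ y z, ‖gradient f y - gradient f z‖ ≤ L * ‖y - z‖)
    (hμ : 0 < μ) (hμL : μ ≤ L / 2)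
    (hfstar : ∀ y, fstar ≤ f y)
    (hPL : ∀ y, 2 * μ * (f y - fstar) ≤ ‖gradient f y‖ ^ 2)
    (ht : 0 < t) (htL : t < 1 / (4 * L))
    (hr : ∀ k i, 0 ≤ 1 + r k i ∧ 1 + r k i ≤ 4)
    (hγ : ∀ k, (∀ i, γ k ≤ 1 + r k i) ∧ ∃ i, γ k = 1 + r k i)
    (hupdate : ∀ k, x (k + 1)
      = x k - (WithLp.equiv 2 (Fin n → ℝ)).symm (fun i => t * (1 + r k i) * gradient f (x k) i)) :
    (∀ k, f (x k) - fstar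
        ≤ (∏ j ∈ Finset.range k, (1 - t * μ * γ j)) * (f (x 0) - fstar))
    ∧ ∀ j, 0 < γ j → 1 / 2 < 1 - t * μ * γ j ∧ 1 - t * μ * γ j < 1 :=
  stmt_10_general n f L μ t fstar x r γ hdiff hLip hμ hμL hPL ht htL hr hγ hupdate
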